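/- Let ε, d, ν, τ > 0 with d > 2ε, let k be a positive integer, let G be a graph, let v ∈ V(G), let M be an (ε,d,νk)-regularized matching in G, and let {f_{CD}}_{(C,D)∈M} be a family of integers between −τk and τk. Suppose (T,r) is a rooted tree with v(T) ≤ (1 − 4(ε + τ/ν)/(d − 2ε))·|V(M)| such that each component of T − r has order at most τk. If V(M) ⊆ N_G(v), then there exists an (r ↪ v, V(T − r) ↪ V(M))-embedding φ of T such that for each (C,D) ∈ M we have | |C ∩ φ(T)| + f_{CD} − |D ∩ φ(T)| | ≤ τk. -/

import Mathlib

/-- A pair `(A,B)` of disjoint vertex sets is `ε`-regular in `G` if all subpairs `(A',B')`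
with `|A'| ≥ ε|A|` and `|B'| ≥ ε|B|` have density within `ε` of the density of `(A,B)`. -/
def IsRegularPair {V : Type} [Fintype V] (G : SimpleGraph V) [DecidableRel G.Adj]
    (ε : ℝ) (A B : Finset V) : Prop :=
  ∀ A' ⊆ A, ∀ B' ⊆ B, ε * A.card ≤ A'.card → ε * B.card ≤ B'.card →
    |(G.edgeDensity A' B' : ℝ) - (G.edgeDensity A B : ℝ)| < ε

/-- An `(ε,d,ℓ)`-regularized matching in `H`: a collection of pairs `(A,B)` with
`|A| = |B| ≥ ℓ`, each inducing an `ε`-regular pair of density at least `d`, all the occurring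
sets being pairwise disjoint. -/
def IsRegularizedMatching {V : Type} [Fintype V] (H : SimpleGraph V) [DecidableRel H.Adj]
    (ε d ℓ : ℝ) (M : Finset (Finset V × Finset V)) : Prop :=
  (∀ p ∈ M, ℓ ≤ (p.1.card : ℝ) ∧ p.1.card = p.2.card) ∧
  (∀ p ∈ M, Disjoint p.1 p.2 ∧ IsRegularPair H ε p.1 p.2 ∧ d ≤ (H.edgeDensity p.1 p.2 : ℝ)) ∧
  (∀ p ∈ M, ∀ q ∈ M, p ≠ q →
    Disjoint p.1 q.1 ∧ Disjoint p.1 q.2 ∧ Disjoint p.2 q.1 ∧ Disjoint p.2 q.2)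

/-- The vertex set `V(M)` of a regularized matching. -/
def matchingVerts {V : Type} [DecidableEq V] (M : Finset (Finset V × Finset V)) : Finset V :=
  M.sup fun p => p.1 ∪ p.2

/-!
The components of `T - r` are embedded one at a time, each into a single pair `(C, D)` of `M`
that still has a `β`-fraction of both sides free, `β = 2(ε + τ/ν)/(d - 2ε)`. Such a pair exists
by pigeonhole: the order bound on `T` leaves enough room overall, and the discrepancy invariant
keeps the used parts of `C` and `D` of nearly equal size.

Inside a pair, a component is embedded greedily, growing a connected subtree: the next vertex
has exactly one embedded neighbour `a` (the component is a tree), and it is sent to an unused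
neighbour of the image of `a` that is typical, i.e. has at least a `(d - ε)`-fraction of the free
part of the opposite side in its neighbourhood. By `ε`-regularity fewer than `ε|C|` vertices are
atypical, so such a choice exists. The two colour classes of the component go to the two sides;
choosing which class goes to `C` gives its contribution to the discrepancy of `(C, D)` the sign
opposite to the current one, so the discrepancy stays within `τk`. Finally `r` is sent to `v`,
which is adjacent to all of `V(M)`.
-/

open Finset SimpleGraph

lemma abs_add_le_or_abs_sub_le {Δ x t : ℝ} (hΔ : |Δ| ≤ t) (hx : |x| ≤ t) :
    |Δ + x| ≤ t ∨ |Δ - x| ≤ t := by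
  rw [abs_le] at hΔ hx
  rcases le_total 0 Δ with h | h <;> rcases le_total 0 x with h' | h'
  · exact .inr (abs_le.mpr ⟨by linarith, by linarith⟩)
  · exact .inl (abs_le.mpr ⟨by linarith, by linarith⟩)
  · exact .inl (abs_le.mpr ⟨by linarith, by linarith⟩)
  · exact .inr (abs_le.mpr ⟨by linarith, by linarith⟩)

section EmbeddingOn

variable {V W : Type*} {T : SimpleGraph W} {G : SimpleGraph V}

def IsEmbeddingOn (T : SimpleGraph W) (G : SimpleGraph V) (A : Set W) (ψ : W → V) : Prop :=
  A.InjOn ψ ∧ ∀ a ∈ A, ∀ b ∈ A, T.Adj a b → G.Adj (ψ a) (ψ b)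

lemma isEmbeddingOn_singleton (a : W) (ψ : W → V) : IsEmbeddingOn T G {a} ψ :=
  ⟨Set.injOn_singleton _ _, by rintro _ rfl _ rfl h; exact absurd h (T.irrefl)⟩

lemma IsEmbeddingOn.congr {A : Set W} {ψ ψ' : W → V} (h : IsEmbeddingOn T G A ψ)
    (h' : A.EqOn ψ ψ') : IsEmbeddingOn T G A ψ' :=
  ⟨h.1.congr h', fun a ha b hb hab => h' ha ▸ h' hb ▸ h.2 a ha b hb hab⟩

lemma IsEmbeddingOn.union {A B : Set W} {ψ : W → V} (hA : IsEmbeddingOn T G A ψ)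
    (hB : IsEmbeddingOn T G B ψ) (hne : ∀ a ∈ A, ∀ b ∈ B, ψ a ≠ ψ b)
    (hcross : ∀ a ∈ A, ∀ b ∈ B, T.Adj a b → G.Adj (ψ a) (ψ b)) :
    IsEmbeddingOn T G (A ∪ B) ψ := by
  refine ⟨?_, ?_⟩
  · rintro a (ha | ha) b (hb | hb) hab
    exacts [hA.1 ha hb hab, absurd hab (hne a ha b hb), absurd hab.symm (hne b hb a ha),
      hB.1 ha hb hab]
  · rintro a (ha | ha) b (hb | hb) hab
    exacts [hA.2 a ha b hb hab, hcross a ha b hb hab, (hcross b hb a ha hab.symm).symm,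
      hB.2 a ha b hb hab]

lemma IsEmbeddingOn.update [DecidableEq W] {A : Set W} {ψ : W → V} (hψ : IsEmbeddingOn T G A ψ)
    {x : W} (hx : x ∉ A) {y : V} (hy : ∀ a ∈ A, ψ a ≠ y)
    (hadj : ∀ a ∈ A, T.Adj x a → G.Adj y (ψ a)) :
    IsEmbeddingOn T G (insert x A) (Function.update ψ x y) := by
  have hagree : Set.EqOn ψ (Function.update ψ x y) A := fun a ha =>
    (Function.update_of_ne (ne_of_mem_of_not_mem ha hx) _ _).symm
  rw [Set.insert_eq]
  refine (isEmbeddingOn_singleton x _).union (hψ.congr hagree) ?_ ?_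
  · rintro _ rfl a ha
    rw [Function.update_self, ← hagree ha]
    exact (hy a ha).symm
  · rintro _ rfl a ha hxa
    rw [Function.update_self, ← hagree ha]
    exact hadj a ha hxa

lemma IsEmbeddingOn.piecewise [DecidableEq W] {P Q : Finset W} {ψ ψQ : W → V}
    (hP : IsEmbeddingOn T G P ψ) (hQ : IsEmbeddingOn T G Q ψQ) (hPQ : Disjoint P Q)
    (hne : ∀ a ∈ P, ∀ b ∈ Q, ψ a ≠ ψQ b) (hedge : ∀ a ∈ P, ∀ b ∈ Q, ¬ T.Adj a b) :
    IsEmbeddingOn T G ↑(P ∪ Q) (Q.piecewise ψQ ψ) := by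
  have hagreeP : Set.EqOn ψ (Q.piecewise ψQ ψ) P := fun a ha =>
    (piecewise_eq_of_notMem _ _ _ (disjoint_left.mp hPQ ha)).symm
  have hagreeQ : Set.EqOn ψQ (Q.piecewise ψQ ψ) Q := fun a ha => (piecewise_eq_of_mem _ _ _ ha).symm
  rw [coe_union]
  refine (hP.congr hagreeP).union (hQ.congr hagreeQ) (fun a ha b hb => ?_)
    fun a ha b hb h => absurd h (hedge a ha b hb)
  rw [← hagreeP ha, ← hagreeQ hb]
  exact hne a ha b hb

end EmbeddingOn

section WalkConnected

variable {W : Type*} {T : SimpleGraph W}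

def IsWalkConnectedFrom (T : SimpleGraph W) (x₀ : W) (A : Set W) : Prop :=
  ∀ y ∈ A, ∃ p : T.Walk x₀ y, ∀ z ∈ p.support, z ∈ A

lemma isWalkConnectedFrom_singleton (x₀ : W) : IsWalkConnectedFrom T x₀ {x₀} := by
  rintro _ rfl
  exact ⟨.nil, by simp⟩

lemma IsWalkConnectedFrom.insert_of_adj {x₀ a x : W} {A : Set W} (hA : IsWalkConnectedFrom T x₀ A)
    (ha : a ∈ A) (hax : T.Adj a x) : IsWalkConnectedFrom T x₀ (insert x A) := by
  rintro y (rfl | hy)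
  · obtain ⟨p, hp⟩ := hA a ha
    refine ⟨p.concat hax, fun z hz => ?_⟩
    simp only [Walk.support_concat, List.mem_append, List.mem_singleton] at hz
    exact hz.elim (fun hz => .inr (hp z hz)) .inl
  · obtain ⟨p, hp⟩ := hA y hy
    exact ⟨p, fun z hz => .inr (hp z hz)⟩

lemma IsWalkConnectedFrom.exists_adj_of_ssubset {x₀ : W} {A Q : Set W}
    (hQ : IsWalkConnectedFrom T x₀ Q) (hx₀ : x₀ ∈ A) (hAQ : A ⊂ Q) :
    ∃ a ∈ A, ∃ x ∈ Q, x ∉ A ∧ T.Adj a x := by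
  obtain ⟨y, hyQ, hyA⟩ := Set.exists_of_ssubset hAQ
  obtain ⟨p, hp⟩ := hQ y hyQ
  obtain ⟨e, he, hea, hex⟩ := p.exists_boundary_dart A hx₀ hyA
  exact ⟨e.fst, hea, e.snd, hp _ (p.dart_snd_mem_support_of_mem_darts he), hex, e.adj⟩

theorem IsWalkConnectedFrom.induction_on [DecidableEq W] {x₀ : W} {Q : Finset W}
    (hQ : IsWalkConnectedFrom T x₀ Q) (hx₀ : x₀ ∈ Q) {motive : Finset W → Prop}
    (base : motive {x₀})
    (step : ∀ A ⊆ Q, IsWalkConnectedFrom T x₀ A → ∀ a ∈ A, ∀ x ∈ Q, x ∉ A → T.Adj a x →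
      motive A → motive (insert x A)) :
    motive Q := by
  have grow : ∀ n < #Q, ∃ A ⊆ Q, #A = n + 1 ∧ x₀ ∈ A ∧ IsWalkConnectedFrom T x₀ A ∧ motive A := by
    intro n hn
    induction n with
    | zero =>
      exact ⟨{x₀}, singleton_subset_iff.mpr hx₀, card_singleton _, mem_singleton_self _,
        by simpa using isWalkConnectedFrom_singleton x₀, base⟩
    | succ n ih =>
      obtain ⟨A, hAQ, hAcard, hx₀A, hA, hmA⟩ := ih (by omega)
      obtain ⟨a, ha, x, hxQ, hxA, hax⟩ := hQ.exists_adj_of_ssubset hx₀A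
        (coe_ssubset.mpr (ssubset_of_subset_of_ne hAQ (by rintro rfl; omega)))
      exact ⟨insert x A, insert_subset hxQ hAQ, by rw [card_insert_of_notMem hxA, hAcard],
        mem_insert_of_mem hx₀A, by rw [coe_insert]; exact hA.insert_of_adj ha hax,
        step A hAQ hA a ha x hxQ hxA hax hmA⟩
  have hQ₀ := card_pos.mpr ⟨x₀, hx₀⟩
  obtain ⟨A, hAQ, hAcard, -, -, hA⟩ := grow (#Q - 1) (by omega)
  rwa [eq_of_subset_of_card_le hAQ (by omega)] at hA

lemma IsWalkConnectedFrom.eq_of_adj_of_adj (hT : T.IsAcyclic) {x₀ x a b : W} {A : Set W}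
    (hA : IsWalkConnectedFrom T x₀ A) (hx : x ∉ A) (ha : a ∈ A) (hb : b ∈ A)
    (hxa : T.Adj x a) (hxb : T.Adj x b) : a = b := by
  classical
  obtain ⟨p, hp⟩ := hA a ha
  obtain ⟨q, hq⟩ := hA b hb
  have hsupp : ∀ z ∈ (p.reverse.append q).bypass.support, z ∈ A := by
    intro z hz
    have := (p.reverse.append q).support_bypass_subset_support hz
    rw [Walk.mem_support_append_iff, Walk.support_reverse, List.mem_reverse] at this
    exact this.elim (hp z) (hq z)
  have := hT.mem_support_of_ne_mem_support_of_adj_of_isPath (Path.singleton hxa.symm).2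
    (Walk.bypass_isPath _) hxb fun h => hx (hsupp x h)
  simp only [Path.singleton, Walk.support_cons, Walk.support_nil, List.mem_cons,
    List.not_mem_nil, or_false] at this
  exact this.elim Eq.symm fun h => absurd (h ▸ hb) hx

lemma isWalkConnectedFrom_connectedComponent {s : Set W} {C : (T.induce s).ConnectedComponent}
    {x₀ : s} (hx₀ : x₀ ∈ C.supp) : IsWalkConnectedFrom T x₀ (Subtype.val '' C.supp) := by
  classical
  rintro _ ⟨y, hy, rfl⟩
  rw [ConnectedComponent.mem_supp_iff] at hx₀ hy
  obtain ⟨p⟩ := ConnectedComponent.exact (hx₀.trans hy.symm)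
  refine ⟨p.map (Embedding.induce s).toHom, fun z hz => ?_⟩
  erw [Walk.support_map, List.mem_map] at hz
  obtain ⟨z, hz, rfl⟩ := hz
  exact ⟨z, (ConnectedComponent.sound ⟨p.takeUntil z hz⟩).symm.trans hx₀, rfl⟩

end WalkConnected

section RegularPair

variable {V : Type} {G : SimpleGraph V} [DecidableRel G.Adj]

def IsTypical (G : SimpleGraph V) [DecidableRel G.Adj] (η : ℝ) (F : Finset V) (u : V) : Prop :=
  η * #F ≤ #{w ∈ F | G.Adj u w}

lemma IsRegularPair.symm [Fintype V] {ε : ℝ} {X Y : Finset V} (h : IsRegularPair G ε X Y) :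
    IsRegularPair G ε Y X := by
  intro Y' hY' X' hX' hY'c hX'c
  simpa only [edgeDensity_comm G Y', edgeDensity_comm G Y] using h X' hX' Y' hY' hX'c hY'c

lemma card_interedges_eq_sum [DecidableEq V] (S F : Finset V) :
    #(G.interedges S F) = ∑ y ∈ S, #{w ∈ F | G.Adj y w} := by
  rw [interedges, Rel.interedges_eq_biUnion, card_biUnion]
  · simp only [card_map]
  · intro a _ b _ hab
    simp only [Function.onFun, Finset.disjoint_left, mem_map, Function.Embedding.coeFn_mk]
    rintro _ ⟨_, _, rfl⟩ ⟨_, _, h⟩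
    exact hab (congrArg Prod.fst h).symm

lemma edgeDensity_lt_of_forall_not_isTypical [DecidableEq V] {η : ℝ} {S F : Finset V}
    (hS : S.Nonempty) (hbad : ∀ y ∈ S, ¬ IsTypical G η F y) : (G.edgeDensity F S : ℝ) < η := by
  obtain ⟨y₀, hy₀⟩ := hS
  have hSpos : (0 : ℝ) < #S := by exact_mod_cast card_pos.mpr ⟨y₀, hy₀⟩
  have hF : (0 : ℝ) < #F := by
    have := not_le.mp (hbad y₀ hy₀)
    by_contra! h
    have : #F = 0 := by exact_mod_cast h.antisymm (Nat.cast_nonneg _)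
    simp_all
  have hsum : (#(G.interedges S F) : ℝ) < η * #F * #S := by
    rw [card_interedges_eq_sum, Nat.cast_sum]
    calc ∑ y ∈ S, (#{w ∈ F | G.Adj y w} : ℝ)
        < ∑ _y ∈ S, η * #F := sum_lt_sum_of_nonempty ⟨y₀, hy₀⟩ fun y hy => not_le.mp (hbad y hy)
      _ = η * #F * #S := by rw [sum_const, nsmul_eq_mul]; ring
  rw [edgeDensity_comm, edgeDensity_def, Rat.cast_div, Rat.cast_mul, Rat.cast_natCast,
    Rat.cast_natCast, Rat.cast_natCast, div_lt_iff₀ (mul_pos hSpos hF)]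
  linarith

theorem IsRegularPair.exists_isTypical [Fintype V] [DecidableEq V] {ε δ : ℝ} {X Y F S : Finset V}
    (hreg : IsRegularPair G ε X Y) (hdens : δ ≤ G.edgeDensity X Y)
    (hF : F ⊆ X) (hFc : ε * #X ≤ #F) (hS : S ⊆ Y) (hSc : ε * #Y < #S) :
    ∃ y ∈ S, IsTypical G (δ - ε) F y := by
  by_contra! hbad
  have hdev := abs_lt.mp (hreg F hF S hS hFc hSc.le)
  have hS : S.Nonempty := by
    rw [← card_pos]
    by_contra! h
    have : (0 : ℝ) ≤ ε * #Y := mul_nonneg (by linarith) (Nat.cast_nonneg _)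
    rw [Nat.le_zero.mp h, Nat.cast_zero] at hSc
    linarith
  linarith [edgeDensity_lt_of_forall_not_isTypical hS hbad]

end RegularPair

lemma SimpleGraph.IsAcyclic.exists_bool_coloring {W : Type} {T : SimpleGraph W}
    (hT : T.IsAcyclic) : ∃ c : W → Bool, ∀ a b, T.Adj a b → c b = !c a := by
  obtain ⟨C⟩ := hT.colorable_two
  exact ⟨fun a => finTwoEquiv (C a), fun a b hab =>
    Bool.eq_not.mpr (finTwoEquiv.injective.ne (C.valid hab)).symm⟩

theorem induction_on_components_erase {W : Type} [Fintype W] [DecidableEq W] (T : SimpleGraph W)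
    (r : W) {motive : Finset W → Prop} (empty : motive ∅)
    (union : ∀ P Q : Finset W, r ∉ P → Disjoint P Q → (∀ a ∈ P, ∀ b ∈ Q, ¬ T.Adj a b) →
      ∀ x₀ : ({w : W | w ≠ r} : Set W),
        (Q : Set W) = Subtype.val '' ((T.induce {w : W | w ≠ r}).connectedComponentMk x₀).supp →
        motive P → motive (P ∪ Q)) :
    motive (univ.erase r) := by
  classical
  set T' := T.induce {w : W | w ≠ r}
  let verts : Finset T'.ConnectedComponent → Finset W :=
    fun s => {a | ∃ h : a ≠ r, T'.connectedComponentMk ⟨a, h⟩ ∈ s}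
  have key : ∀ s, motive (verts s) := by
    intro s
    induction s using Finset.induction_on with
    | empty => simpa [verts] using empty
    | insert C s hC ih =>
      obtain ⟨x₀, rfl⟩ : ∃ x₀, T'.connectedComponentMk x₀ = C := C.exists_rep
      have hunion : verts (insert (T'.connectedComponentMk x₀) s) =
          verts s ∪ verts {T'.connectedComponentMk x₀} := by
        ext a
        simp only [verts, mem_filter, mem_univ, true_and, mem_insert, mem_union, mem_singleton]
        grind
      rw [hunion]
      refine union _ _ (by simp [verts]) ?_ ?_ x₀ ?_ ih
      · rw [Finset.disjoint_left]
        simp only [verts, mem_filter, mem_univ, true_and, mem_singleton]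
        rintro a ⟨h, hs⟩ ⟨h', hx₀⟩
        exact hC (hx₀ ▸ hs)
      · simp only [verts, mem_filter, mem_univ, true_and, mem_singleton]
        rintro a ⟨ha, has⟩ b ⟨hb, hbC⟩ hab
        have : T'.connectedComponentMk ⟨a, ha⟩ = T'.connectedComponentMk ⟨b, hb⟩ :=
          ConnectedComponent.connectedComponentMk_eq_of_adj (by simpa [T'] using hab)
        rw [this, hbC] at has
        exact hC has
      · ext a
        simp [verts, ConnectedComponent.mem_supp_iff]
  convert key univ using 1
  ext a
  simp [verts]

section GreedyEmbedding

variable {V W : Type} [Fintype V] [DecidableEq V] {G : SimpleGraph V} [DecidableRel G.Adj]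
  {T : SimpleGraph W} {ε δ : ℝ} {S F : Bool → Finset V} {c : W → Bool}

def IsTypicalEmbeddingOn (G : SimpleGraph V) [DecidableRel G.Adj] (T : SimpleGraph W) (η : ℝ)
    (F : Bool → Finset V) (c : W → Bool) (A : Set W) (ψ : W → V) : Prop :=
  IsEmbeddingOn T G A ψ ∧ ∀ a ∈ A, ψ a ∈ F (c a) ∧ IsTypical G η (F !(c a)) (ψ a)

lemma IsTypicalEmbeddingOn.exists_insert [DecidableEq W] (hT : T.IsAcyclic)
    (hc : ∀ a b, T.Adj a b → c b = !c a)
    (hreg : ∀ b, IsRegularPair G ε (S b) (S !b)) (hdens : ∀ b, δ ≤ G.edgeDensity (S b) (S !b))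
    (hF : ∀ b, F b ⊆ S b) (hFc : ∀ b, ε * #(S b) ≤ #(F b)) {A : Finset W} {ψ : W → V} {x₀ : W}
    (hψ : IsTypicalEmbeddingOn G T (δ - ε) F c A ψ) (hA : IsWalkConnectedFrom T x₀ A)
    {a x : W} (ha : a ∈ A) (hx : x ∉ A) (hax : T.Adj a x)
    (hroom : ∀ b, ε * #(S b) + #A < (δ - ε) * #(F b)) :
    ∃ ψ', IsTypicalEmbeddingOn G T (δ - ε) F c ↑(insert x A) ψ' := by
  have hcx : (!c a) = c x := (hc a x hax).symm
  obtain ⟨-, htyp⟩ := hψ.2 a ha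
  rw [hcx] at htyp
  set N := {y ∈ F (c x) | G.Adj (ψ a) y} \ A.image ψ
  have hN : ε * #(S (c x)) < #N := by
    have h₁ : #{y ∈ F (c x) | G.Adj (ψ a) y} ≤ #N + #(A.image ψ) := card_le_card_sdiff_add_card
    have h₂ : #(A.image ψ) ≤ #A := card_image_le
    have h₃ := hroom (c x)
    have h₄ : ((#{y ∈ F (c x) | G.Adj (ψ a) y} : ℕ) : ℝ) ≤ #N + #A := by
      exact_mod_cast h₁.trans (by omega)
    unfold IsTypical at htyp
    linarith
  obtain ⟨y, hyN, hy⟩ := (by simpa using hreg (!c x) : IsRegularPair G ε (S !c x) (S (c x)))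
    |>.exists_isTypical (by simpa using hdens (!c x)) (hF _) (hFc _)
      ((sdiff_subset.trans (filter_subset _ _)).trans (hF _)) hN
  obtain ⟨hyF, hyadj⟩ := mem_filter.mp (mem_sdiff.mp hyN).1
  have hyA : y ∉ A.image ψ := (mem_sdiff.mp hyN).2
  refine ⟨Function.update ψ x y, ?_, ?_⟩
  · rw [coe_insert]
    refine hψ.1.update hx (fun b hb h => hyA (h ▸ mem_image_of_mem ψ hb)) fun b hb hxb => ?_
    rw [← hA.eq_of_adj_of_adj hT hx ha hb hax.symm hxb]
    exact hyadj.symm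
  · intro b hb
    rcases mem_insert.mp hb with rfl | hb
    · rw [Function.update_self]
      exact ⟨hyF, hy⟩
    · rw [Function.update_of_ne (ne_of_mem_of_not_mem hb hx)]
      exact hψ.2 b hb

theorem exists_isEmbeddingOn_of_isRegularPair [DecidableEq W] (hε : 0 ≤ ε) (hT : T.IsAcyclic)
    (hc : ∀ a b, T.Adj a b → c b = !c a)
    (hreg : ∀ b, IsRegularPair G ε (S b) (S !b)) (hdens : ∀ b, δ ≤ G.edgeDensity (S b) (S !b))
    (hF : ∀ b, F b ⊆ S b) {Q : Finset W} {x₀ : W} (hx₀ : x₀ ∈ Q)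
    (hQ : IsWalkConnectedFrom T x₀ Q) (hroom : ∀ b, ε * #(S b) + #Q ≤ (δ - ε) * #(F b)) :
    ∃ ψ, IsEmbeddingOn T G Q ψ ∧ ∀ a ∈ Q, ψ a ∈ F (c a) := by
  have hFc : ∀ b, ε * #(S b) < #(F b) := by
    intro b
    have h₁ : (1 : ℝ) ≤ #Q := by exact_mod_cast card_pos.mpr ⟨x₀, hx₀⟩
    have h₂ : δ ≤ 1 := (hdens b).trans (by exact_mod_cast edgeDensity_le_one _ _ _)
    have h₃ : (δ - ε) * #(F b) ≤ #(F b) := by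
      nlinarith [(Nat.cast_nonneg (#(F b)) : (0 : ℝ) ≤ #(F b))]
    linarith [hroom b]
  obtain ⟨y₀, hy₀F, hy₀⟩ := (by simpa using hreg (!c x₀) : IsRegularPair G ε (S !c x₀) (S (c x₀)))
    |>.exists_isTypical (by simpa using hdens (!c x₀)) (hF _) (hFc _).le (hF _) (hFc _)
  obtain ⟨ψ, hψ⟩ := hQ.induction_on hx₀
    (motive := fun A => ∃ ψ, IsTypicalEmbeddingOn G T (δ - ε) F c A ψ)
    ⟨fun _ => y₀, by
      rw [coe_singleton]
      exact ⟨isEmbeddingOn_singleton _ _, by rintro _ rfl; exact ⟨hy₀F, hy₀⟩⟩⟩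
    fun A hAQ hA a ha x hxQ hxA hax ⟨ψ, hψ⟩ =>
      hψ.exists_insert hT hc hreg hdens hF (fun b => (hFc b).le) hA ha hxA hax fun b => by
        have : (#A : ℝ) < #Q := by
          exact_mod_cast card_lt_card (ssubset_of_subset_of_ne hAQ (by rintro rfl; exact hxA hxQ))
        linarith [hroom b]
  exact ⟨ψ, hψ.1, fun a ha => (hψ.2 a ha).1⟩

end GreedyEmbedding

section Matching

variable {V : Type} {M : Finset (Finset V × Finset V)}

def pairSide (p : Finset V × Finset V) (b : Bool) : Finset V := bif b then p.2 else p.1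

@[simp] lemma pairSide_false (p : Finset V × Finset V) : pairSide p false = p.1 := rfl

@[simp] lemma pairSide_true (p : Finset V × Finset V) : pairSide p true = p.2 := rfl

lemma filter_mem_pairSide [DecidableEq V] {W : Type} {p : Finset V × Finset V}
    (hp : Disjoint p.1 p.2) {Q : Finset W} {φ : W → V} {c : W → Bool}
    (hφ : ∀ x ∈ Q, φ x ∈ pairSide p (c x)) (b : Bool) :
    {x ∈ Q | φ x ∈ pairSide p b} = {x ∈ Q | c x = b} := by
  refine filter_congr fun x hx => ⟨fun h => ?_, fun h => h ▸ hφ x hx⟩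
  have := hφ x hx
  generalize c x = b' at this ⊢
  cases b <;> cases b' <;> simp_all [Finset.disjoint_left.mp hp]

lemma pairSide_subset_union [DecidableEq V] (p : Finset V × Finset V) (b : Bool) :
    pairSide p b ⊆ p.1 ∪ p.2 := by
  cases b
  exacts [subset_union_left, subset_union_right]

lemma pairSide_subset_matchingVerts [DecidableEq V] {p : Finset V × Finset V} (hp : p ∈ M)
    (b : Bool) : pairSide p b ⊆ matchingVerts M :=
  (pairSide_subset_union p b).trans (le_sup (f := fun q => q.1 ∪ q.2) hp)

variable [Fintype V] {G : SimpleGraph V} [DecidableRel G.Adj] {ε d ℓ : ℝ}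

namespace IsRegularizedMatching

lemma isRegularPair_pairSide (hM : IsRegularizedMatching G ε d ℓ M) {p : Finset V × Finset V}
    (hp : p ∈ M) (b : Bool) : IsRegularPair G ε (pairSide p b) (pairSide p !b) := by
  cases b
  exacts [(hM.2.1 p hp).2.1, (hM.2.1 p hp).2.1.symm]

lemma le_edgeDensity_pairSide (hM : IsRegularizedMatching G ε d ℓ M) {p : Finset V × Finset V}
    (hp : p ∈ M) (b : Bool) : d ≤ G.edgeDensity (pairSide p b) (pairSide p !b) := by
  cases b
  exacts [(hM.2.1 p hp).2.2, edgeDensity_comm G p.1 p.2 ▸ (hM.2.1 p hp).2.2]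

variable [DecidableEq V]

lemma pairwiseDisjoint (hM : IsRegularizedMatching G ε d ℓ M) :
    (M : Set (Finset V × Finset V)).PairwiseDisjoint fun p => p.1 ∪ p.2 := by
  intro p hp q hq hpq
  obtain ⟨h₁, h₂, h₃, h₄⟩ := hM.2.2 p hp q hq hpq
  exact disjoint_union_left.mpr ⟨disjoint_union_right.mpr ⟨h₁, h₂⟩,
    disjoint_union_right.mpr ⟨h₃, h₄⟩⟩

lemma card_matchingVerts (hM : IsRegularizedMatching G ε d ℓ M) :
    #(matchingVerts M) = ∑ p ∈ M, 2 * #p.1 := by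
  rw [matchingVerts, sup_eq_biUnion, card_biUnion hM.pairwiseDisjoint]
  refine sum_congr rfl fun p hp => ?_
  rw [card_union_of_disjoint (hM.2.1 p hp).1, ← (hM.1 p hp).2, two_mul]

lemma sum_card_inter_le (hM : IsRegularizedMatching G ε d ℓ M) (U : Finset V) :
    ∑ p ∈ M, #((p.1 ∪ p.2) ∩ U) ≤ #U := by
  rw [← card_biUnion]
  · exact card_le_card (biUnion_subset.mpr fun _ _ => inter_subset_right)
  · exact hM.pairwiseDisjoint.mono fun _ => inter_subset_left

theorem exists_le_card_pairSide_sdiff (hM : IsRegularizedMatching G ε d ℓ M) (U : Finset V)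
    (R : Finset V × Finset V → ℝ) {s : ℝ} (hbal : ∀ p ∈ M, |(#(p.1 ∩ U) : ℝ) - #(p.2 ∩ U)| ≤ s)
    (hU : (#U : ℝ) < ∑ p ∈ M, (2 * #p.1 - 2 * R p - s)) :
    ∃ p ∈ M, ∀ b, R p ≤ #(pairSide p b \ U) := by
  by_contra! h
  have hfull : ∀ p ∈ M, 2 * #p.1 - 2 * R p - s ≤ #((p.1 ∪ p.2) ∩ U) := by
    intro p hp
    obtain ⟨b, hb⟩ := h p hp
    have h₁ : (#(p.1 \ U) : ℝ) + #(p.1 ∩ U) = #p.1 := by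
      exact_mod_cast card_sdiff_add_card_inter p.1 U
    have h₂ : (#(p.2 \ U) : ℝ) + #(p.2 ∩ U) = #p.1 := by
      rw [(hM.1 p hp).2]; exact_mod_cast card_sdiff_add_card_inter p.2 U
    have h₃ := abs_le.mp (hbal p hp)
    rw [union_inter_distrib_right, card_union_of_disjoint
      ((hM.2.1 p hp).1.mono inter_subset_left inter_subset_left), Nat.cast_add]
    cases b <;> simp only [pairSide_false, pairSide_true] at hb <;> linarith
  have hcover : (∑ p ∈ M, #((p.1 ∪ p.2) ∩ U) : ℝ) ≤ #U := by
    exact_mod_cast hM.sum_card_inter_le U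
  linarith [sum_le_sum hfull]

end IsRegularizedMatching

end Matching

section Balanced

variable {V W : Type} [DecidableEq V] {G : SimpleGraph V}
  {T : SimpleGraph W} {M : Finset (Finset V × Finset V)} {f : Finset V × Finset V → ℤ}
  {ε d ℓ t : ℝ}

def IsBalancedEmbeddingOn (T : SimpleGraph W) (G : SimpleGraph V)
    (M : Finset (Finset V × Finset V)) (f : Finset V × Finset V → ℤ) (t : ℝ) (P : Finset W)
    (ψ : W → V) : Prop :=
  IsEmbeddingOn T G P ψ ∧ (∀ a ∈ P, ψ a ∈ matchingVerts M) ∧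
    ∀ p ∈ M, |(#{a ∈ P | ψ a ∈ p.1} : ℝ) + f p - #{a ∈ P | ψ a ∈ p.2}| ≤ t

lemma card_inter_image_of_injOn {P : Finset W} {ψ : W → V} (hψ : Set.InjOn ψ P) (s : Finset V) :
    #(s ∩ P.image ψ) = #{a ∈ P | ψ a ∈ s} := by
  rw [inter_comm, ← filter_mem_eq_inter, filter_image,
    card_image_of_injOn (hψ.mono (coe_subset.mpr (filter_subset _ _)))]

lemma card_filter_piecewise [DecidableEq W] {P Q : Finset W} (hPQ : Disjoint P Q)
    (ψ ψQ : W → V) (s : Finset V) :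
    #{a ∈ P ∪ Q | Q.piecewise ψQ ψ a ∈ s} = #{a ∈ P | ψ a ∈ s} + #{a ∈ Q | ψQ a ∈ s} := by
  rw [filter_union, card_union_of_disjoint (disjoint_filter_filter hPQ)]
  congr 2
  · exact filter_congr fun a ha => by rw [piecewise_eq_of_notMem _ _ _ (disjoint_left.mp hPQ ha)]
  · exact filter_congr fun a ha => by rw [piecewise_eq_of_mem _ _ _ ha]

section Extension

variable [Fintype V] [DecidableRel G.Adj]

lemma IsBalancedEmbeddingOn.union_piecewise [DecidableEq W]
    (hM : IsRegularizedMatching G ε d ℓ M)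
    {P Q : Finset W} {ψ ψQ : W → V} {c : W → Bool} {p : Finset V × Finset V} (hp : p ∈ M)
    (hψ : IsBalancedEmbeddingOn T G M f t P ψ) (hψQ : IsEmbeddingOn T G Q ψQ)
    (hside : ∀ x ∈ Q, ψQ x ∈ pairSide p (c x) \ P.image ψ)
    (hPQ : Disjoint P Q) (hedge : ∀ a ∈ P, ∀ b ∈ Q, ¬ T.Adj a b)
    (hdisc : |(#{a ∈ P | ψ a ∈ p.1} : ℝ) + f p - #{a ∈ P | ψ a ∈ p.2} +
      (#{x ∈ Q | c x = false} - #{x ∈ Q | c x = true})| ≤ t) :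
    IsBalancedEmbeddingOn T G M f t (P ∪ Q) (Q.piecewise ψQ ψ) := by
  have hagreeP : Set.EqOn ψ (Q.piecewise ψQ ψ) P := fun a ha =>
    (piecewise_eq_of_notMem _ _ _ (disjoint_left.mp hPQ ha)).symm
  have hagreeQ : Set.EqOn ψQ (Q.piecewise ψQ ψ) Q := fun a ha => (piecewise_eq_of_mem _ _ _ ha).symm
  have hmem : ∀ x ∈ Q, ψQ x ∈ pairSide p (c x) := fun x hx => (mem_sdiff.mp (hside x hx)).1
  refine ⟨hψ.1.piecewise hψQ hPQ (fun a ha b hb h => ?_) hedge, ?_, fun q hq => ?_⟩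
  · exact (mem_sdiff.mp (hside b hb)).2 (h ▸ mem_image_of_mem ψ ha)
  · intro a ha
    rcases mem_union.mp ha with ha | ha
    · exact hagreeP ha ▸ hψ.2.1 a ha
    · exact hagreeQ ha ▸ pairSide_subset_matchingVerts hp _ (hmem a ha)
  rw [card_filter_piecewise hPQ, card_filter_piecewise hPQ]
  by_cases hqp : q = p
  · subst hqp
    have h₁ : {x ∈ Q | ψQ x ∈ q.1} = {x ∈ Q | c x = false} :=
      filter_mem_pairSide (hM.2.1 q hp).1 hmem false
    have h₂ : {x ∈ Q | ψQ x ∈ q.2} = {x ∈ Q | c x = true} :=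
      filter_mem_pairSide (hM.2.1 q hp).1 hmem true
    rw [h₁, h₂]
    convert hdisc using 2
    push_cast
    ring
  · have hdisj := hM.pairwiseDisjoint hq hp hqp
    have hnone : ∀ s ⊆ q.1 ∪ q.2, {x ∈ Q | ψQ x ∈ s} = ∅ := fun s hs =>
      filter_eq_empty_iff.mpr fun x hx h => disjoint_left.mp hdisj (hs h)
        (pairSide_subset_union p _ (hmem x hx))
    rw [hnone _ subset_union_left, hnone _ subset_union_right]
    simpa using hψ.2.2 q hq

theorem IsBalancedEmbeddingOn.exists_union [DecidableEq W]
    (hM : IsRegularizedMatching G ε d ℓ M)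
    (hε : 0 ≤ ε) (hT : T.IsAcyclic) {c : W → Bool} (hc : ∀ a b, T.Adj a b → c b = !c a)
    {P Q : Finset W} {ψ : W → V} (hψ : IsBalancedEmbeddingOn T G M f t P ψ)
    (hPQ : Disjoint P Q) (hedge : ∀ a ∈ P, ∀ b ∈ Q, ¬ T.Adj a b)
    {x₀ : W} (hx₀ : x₀ ∈ Q) (hQ : IsWalkConnectedFrom T x₀ Q) (hQt : #Q ≤ t)
    {p : Finset V × Finset V} (hp : p ∈ M)
    (hroom : ∀ b, ε * #(pairSide p b) + t ≤ (d - ε) * #(pairSide p b \ P.image ψ)) :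
    ∃ ψ', IsBalancedEmbeddingOn T G M f t (P ∪ Q) ψ' := by
  have hsplit : #{x ∈ Q | c x = false} + #{x ∈ Q | c x = true} = #Q := by
    simpa using card_filter_add_card_filter_not (s := Q) (fun x => c x = false)
  have hx : |(#{x ∈ Q | c x = false} : ℝ) - #{x ∈ Q | c x = true}| ≤ t := by
    have : (#{x ∈ Q | c x = false} : ℝ) + #{x ∈ Q | c x = true} = #Q := by exact_mod_cast hsplit
    rw [abs_le]
    constructor <;> linarith [(Nat.cast_nonneg _ : (0 : ℝ) ≤ #{x ∈ Q | c x = false}),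
      (Nat.cast_nonneg _ : (0 : ℝ) ≤ #{x ∈ Q | c x = true})]
  -- Swapping the colour classes reverses the sign of the contribution of `Q` to the discrepancy.
  obtain ⟨c', hc', hdisc⟩ : ∃ c' : W → Bool, (∀ a b, T.Adj a b → c' b = !c' a) ∧
      |(#{a ∈ P | ψ a ∈ p.1} : ℝ) + f p - #{a ∈ P | ψ a ∈ p.2} +
        (#{x ∈ Q | c' x = false} - #{x ∈ Q | c' x = true})| ≤ t := by
    rcases abs_add_le_or_abs_sub_le (hψ.2.2 p hp) hx with h | h
    · exact ⟨c, hc, h⟩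
    · refine ⟨fun x => !c x, fun a b hab => by simp only [hc a b hab], ?_⟩
      have h₁ : {x ∈ Q | (!c x) = false} = {x ∈ Q | c x = true} := filter_congr fun x _ => by simp
      have h₂ : {x ∈ Q | (!c x) = true} = {x ∈ Q | c x = false} := filter_congr fun x _ => by simp
      rw [h₁, h₂]
      convert h using 2
      ring
  obtain ⟨ψQ, hψQ, hside⟩ := exists_isEmbeddingOn_of_isRegularPair (S := pairSide p)
    (F := fun b => pairSide p b \ P.image ψ) hε hT hc' (hM.isRegularPair_pairSide hp)
    (hM.le_edgeDensity_pairSide hp) (fun _ => sdiff_subset) hx₀ hQ fun b => by linarith [hroom b]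
  exact ⟨_, hψ.union_piecewise hM hp hψQ hside hPQ hedge hdisc⟩

theorem IsBalancedEmbeddingOn.exists_room (hM : IsRegularizedMatching G ε d ℓ M)
    (hεd : ε ≤ d) (hf : ∀ p ∈ M, |(f p : ℝ)| ≤ t) {P : Finset W} {ψ : W → V}
    (hψ : IsBalancedEmbeddingOn T G M f t P ψ) {β : ℝ}
    (hβ : ∀ p ∈ M, t ≤ β * #p.1 ∧ ε * #p.1 + t ≤ (d - ε) * (β * #p.1))
    (hP : (#P : ℝ) < (1 - 2 * β) * #(matchingVerts M)) :
    ∃ p ∈ M, ∀ b, ε * #(pairSide p b) + t ≤ (d - ε) * #(pairSide p b \ P.image ψ) := by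
  have hbal : ∀ p ∈ M, |(#(p.1 ∩ P.image ψ) : ℝ) - #(p.2 ∩ P.image ψ)| ≤ 2 * t := by
    intro p hp
    rw [card_inter_image_of_injOn hψ.1.1, card_inter_image_of_injOn hψ.1.1]
    have h₁ := abs_le.mp (hψ.2.2 p hp)
    have h₂ := abs_le.mp (hf p hp)
    rw [abs_le]
    constructor <;> linarith
  have hU : (#(P.image ψ) : ℝ) < ∑ p ∈ M, (2 * #p.1 - 2 * (β * #p.1) - 2 * t) :=
    calc (#(P.image ψ) : ℝ) ≤ #P := by exact_mod_cast card_image_le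
      _ < (1 - 2 * β) * #(matchingVerts M) := hP
      _ = ∑ p ∈ M, (1 - 2 * β) * (2 * #p.1) := by
        rw [hM.card_matchingVerts, Nat.cast_sum, mul_sum]; push_cast; rfl
      _ ≤ _ := sum_le_sum fun p hp => by linarith [(hβ p hp).1]
  obtain ⟨p, hp, hroom⟩ := hM.exists_le_card_pairSide_sdiff _ (fun p => β * #p.1) hbal hU
  refine ⟨p, hp, fun b => ?_⟩
  have hcard : #(pairSide p b) = #p.1 := by
    cases b
    exacts [rfl, (hM.1 p hp).2.symm]
  rw [hcard]
  exact (hβ p hp).2.trans (mul_le_mul_of_nonneg_left (hroom b) (by linarith))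

theorem exists_isBalancedEmbeddingOn_erase [Nonempty V] [Fintype W] [DecidableEq W]
    (hM : IsRegularizedMatching G ε d ℓ M) (hε : 0 ≤ ε) (hεd : ε ≤ d)
    (hf : ∀ p ∈ M, |(f p : ℝ)| ≤ t) (hT : T.IsAcyclic) (r : W)
    (hcomp : ∀ (a : W) (ha : a ≠ r),
      ((((T.induce {w : W | w ≠ r}).connectedComponentMk ⟨a, ha⟩).supp.ncard : ℝ) ≤ t))
    {β : ℝ} (hβ : ∀ p ∈ M, t ≤ β * #p.1 ∧ ε * #p.1 + t ≤ (d - ε) * (β * #p.1))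
    (horder : (Fintype.card W : ℝ) ≤ (1 - 2 * β) * #(matchingVerts M)) :
    ∃ ψ, IsBalancedEmbeddingOn T G M f t (univ.erase r) ψ := by
  obtain ⟨c, hc⟩ := hT.exists_bool_coloring
  refine induction_on_components_erase (motive := fun P => ∃ ψ, IsBalancedEmbeddingOn T G M f t P ψ)
    T r ⟨fun _ => Classical.arbitrary V, ?_⟩ ?_
  · exact ⟨by simp [IsEmbeddingOn], by simp, fun p hp => by simpa using hf p hp⟩
  rintro P Q hrP hPQ hedge x₀ hQ ⟨ψ, hψ⟩
  have hP : (#P : ℝ) < Fintype.card W := by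
    exact_mod_cast card_lt_univ_of_notMem hrP
  obtain ⟨p, hp, hroom⟩ := hψ.exists_room hM hεd hf hβ (hP.trans_le horder)
  have hQt : (#Q : ℝ) ≤ t := by
    rw [← Set.ncard_coe_finset, hQ, Set.ncard_image_of_injective _ Subtype.val_injective]
    exact hcomp x₀ x₀.2
  exact hψ.exists_union hM hε hT hc hPQ hedge (by rw [← mem_coe, hQ]; exact ⟨x₀, rfl, rfl⟩)
    (hQ ▸ isWalkConnectedFrom_connectedComponent rfl) hQt hp hroom

end Extension

theorem IsBalancedEmbeddingOn.exists_hom_of_erase [Fintype W] [DecidableEq W] {r : W}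
    {ψ : W → V} (hψ : IsBalancedEmbeddingOn T G M f t (univ.erase r) ψ) {v : V}
    (hnbr : ∀ u ∈ matchingVerts M, G.Adj v u) :
    ∃ φ : T →g G, Function.Injective φ ∧ φ r = v ∧ (∀ a : W, a ≠ r → φ a ∈ matchingVerts M) ∧
      ∀ p ∈ M, |(((p.1 : Set V) ∩ Set.range φ).ncard : ℝ) + f p
        - (((p.2 : Set V) ∩ Set.range φ).ncard : ℝ)| ≤ t := by
  have hv : v ∉ matchingVerts M := fun h => G.irrefl (hnbr v h)
  have hemb := hψ.1.update (x := r) (y := v) (by simp) (fun a ha h => hv (h ▸ hψ.2.1 a ha))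
    fun a ha _ => hnbr _ (hψ.2.1 a ha)
  rw [coe_erase, coe_univ, Set.insert_sdiff_singleton, Set.insert_eq_of_mem (Set.mem_univ r)]
    at hemb
  set φ := Function.update ψ r v
  have hφr : φ r = v := Function.update_self ..
  have hagree : ∀ a ≠ r, φ a = ψ a := fun a ha => Function.update_of_ne ha _ _
  have hinj : Function.Injective φ := Set.injOn_univ.mp hemb.1
  have hcount : ∀ s ⊆ matchingVerts M,
      ((s : Set V) ∩ Set.range φ).ncard = #{a ∈ univ.erase r | ψ a ∈ s} := by
    intro s hs
    rw [← Set.image_preimage_eq_inter_range, Set.ncard_image_of_injective _ hinj,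
      ← Set.ncard_coe_finset]
    congr 1
    ext a
    by_cases ha : a = r
    · subst ha
      simpa [φ] using fun h => hv (hs h)
    · simp [φ, ha]
  refine ⟨⟨φ, fun {a b} h => hemb.2 a trivial b trivial h⟩, hinj, hφr, ?_,
    fun p hp => ?_⟩
  · intro a ha
    change φ a ∈ _
    rw [hagree a ha]
    exact hψ.2.1 a (mem_erase.mpr ⟨ha, mem_univ a⟩)
  · change |((↑p.1 ∩ Set.range φ).ncard : ℝ) + f p - (↑p.2 ∩ Set.range φ).ncard| ≤ t
    rw [hcount p.1 (pairSide_subset_matchingVerts hp false),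
      hcount p.2 (pairSide_subset_matchingVerts hp true)]
    exact hψ.2.2 p hp

end Balanced

/-- The inequalities that make `β = 2(ε + τ/ν)/(d - 2ε)` a sufficient free fraction of each side
of a pair with sides of size `m ≥ νk`. -/
lemma slack_bounds {ε d ν τ k m : ℝ} (hε : 0 ≤ ε) (hd : 2 * ε < d) (hd₁ : d ≤ 1) (hν : 0 < ν)
    (hτ : 0 ≤ τ) (hm : ν * k ≤ m) (hm₀ : 0 ≤ m) :
    τ * k ≤ 2 * (ε + τ / ν) / (d - 2 * ε) * m ∧
      ε * m + τ * k ≤ (d - ε) * (2 * (ε + τ / ν) / (d - 2 * ε) * m) := by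
  set β := 2 * (ε + τ / ν) / (d - 2 * ε)
  have hβ : β * (d - 2 * ε) = 2 * (ε + τ / ν) := div_mul_cancel₀ _ (by linarith)
  have hβ₀ : 0 ≤ β * m := mul_nonneg (div_nonneg (by positivity) (by linarith)) hm₀
  have hτk : τ * k ≤ τ / ν * m := by
    rw [div_mul_eq_mul_div, le_div_iff₀ hν]
    nlinarith
  have hτm : 0 ≤ τ / ν * m := by positivity
  have hεm : 0 ≤ ε * m := by positivity
  have hβm : 2 * (ε + τ / ν) * m = β * m * (d - 2 * ε) := by rw [← hβ]; ring
  constructor <;> nlinarith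

theorem stmt12_general (V : Type) [Fintype V] [DecidableEq V] (G : SimpleGraph V) [DecidableRel G.Adj]
    (ε d ν τ : ℝ) (hε : 0 < ε) (hd : 2 * ε < d) (hν : 0 < ν) (hτ : 0 < τ)
    (k : ℕ) (v : V) (M : Finset (Finset V × Finset V))
    (hM : IsRegularizedMatching G ε d (ν * k) M)
    (f : Finset V × Finset V → ℤ) (hf : ∀ p ∈ M, |(f p : ℝ)| ≤ τ * k)
    (W : Type) [Fintype W] (T : SimpleGraph W) (hT : T.IsTree) (r : W)
    (horder : (Fintype.card W : ℝ) ≤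
      (1 - 4 * (ε + τ / ν) / (d - 2 * ε)) * ((matchingVerts M).card : ℝ))
    (hcomp : ∀ (a : W) (ha : a ≠ r),
      ((((T.induce {w : W | w ≠ r}).connectedComponentMk ⟨a, ha⟩).supp.ncard : ℝ) ≤ τ * k))
    (hnbr : ∀ u ∈ matchingVerts M, G.Adj v u) :
    ∃ φ : T →g G, Function.Injective φ ∧ φ r = v ∧
      (∀ a : W, a ≠ r → φ a ∈ matchingVerts M) ∧
      (∀ p ∈ M,
        |(((p.1 : Set V) ∩ Set.range ⇑φ).ncard : ℝ) + (f p : ℝ)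
            - (((p.2 : Set V) ∩ Set.range ⇑φ).ncard : ℝ)| ≤ τ * k) := by
  classical
  have : Nonempty V := ⟨v⟩
  set β := 2 * (ε + τ / ν) / (d - 2 * ε)
  have horder' : (Fintype.card W : ℝ) ≤ (1 - 2 * β) * #(matchingVerts M) := by
    convert horder using 3
    ring
  have hβ : ∀ p ∈ M, τ * k ≤ β * #p.1 ∧ ε * #p.1 + τ * k ≤ (d - ε) * (β * #p.1) :=
    fun p hp => slack_bounds hε.le hd
      ((hM.2.1 p hp).2.2.trans (by exact_mod_cast edgeDensity_le_one _ _ _)) hν hτ.le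
      (hM.1 p hp).1 (Nat.cast_nonneg _)
  obtain ⟨ψ, hψ⟩ := exists_isBalancedEmbeddingOn_erase hM hε.le (by linarith) hf hT.isAcyclic r
    hcomp hβ horder'
  exact hψ.exists_hom_of_erase hnbr

/-- Balanced embedding of a rooted tree into a regularized matching seen
from a vertex `v`: the root goes to `v`, the rest to `V(M)`, and for each `(C,D) ∈ M` the
discrepancy `|C ∩ φ(T)| + f_{CD} − |D ∩ φ(T)|` is at most `τk` in absolute value. -/
theorem stmt12 (V : Type) [Fintype V] [DecidableEq V] (G : SimpleGraph V) [DecidableRel G.Adj]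
    (ε d ν τ : ℝ) (hε : 0 < ε) (hd : 2 * ε < d) (hν : 0 < ν) (hτ : 0 < τ)
    (k : ℕ) (hk : 0 < k) (v : V) (M : Finset (Finset V × Finset V))
    (hM : IsRegularizedMatching G ε d (ν * k) M)
    (f : Finset V × Finset V → ℤ) (hf : ∀ p ∈ M, |(f p : ℝ)| ≤ τ * k)
    (W : Type) [Fintype W] (T : SimpleGraph W) (hT : T.IsTree) (r : W)
    (horder : (Fintype.card W : ℝ) ≤
      (1 - 4 * (ε + τ / ν) / (d - 2 * ε)) * ((matchingVerts M).card : ℝ))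
    (hcomp : ∀ (a : W) (ha : a ≠ r),
      ((((T.induce {w : W | w ≠ r}).connectedComponentMk ⟨a, ha⟩).supp.ncard : ℝ) ≤ τ * k))
    (hnbr : ∀ u ∈ matchingVerts M, G.Adj v u) :
    ∃ φ : T →g G, Function.Injective φ ∧ φ r = v ∧
      (∀ a : W, a ≠ r → φ a ∈ matchingVerts M) ∧
      (∀ p ∈ M,
        |(((p.1 : Set V) ∩ Set.range ⇑φ).ncard : ℝ) + (f p : ℝ)
            - (((p.2 : Set V) ∩ Set.range ⇑φ).ncard : ℝ)| ≤ τ * k) :=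
  stmt12_general V G ε d ν τ hε hd hν hτ k v M hM f hf W T hT r horder hcomp hnbr
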